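/- Let a ≥ 0 and let x, y : ℕ → ℝ satisfy 0 ≤ x_m ≤ a^m and 0 ≤ y_n ≤ a^n for all m, n ∈ ℕ. Then the family ((m̃+ñ)!/(m! · n! · m̃! · ñ!)) · x_m · y_n, indexed by the quadruples (m, n, m̃, ñ) ∈ ℕ⁴ with m + n = m̃ + ñ, is summable and Σ_{m+n=m̃+ñ} ((m̃+ñ)!/(m! n! m̃! ñ!)) x_m y_n ≤ e^{4a}. -/
import Mathlib


/-- The summand of Lemma D.5: for a quadruple `(m, n, m̃, ñ)`,
`((m̃+ñ)! / (m! n! m̃! ñ!)) * x m * y n`. -/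
noncomputable def summandD5 (x y : ℕ → ℝ) (q : ℕ × ℕ × ℕ × ℕ) : ℝ :=
  ((q.2.2.1 + q.2.2.2).factorial : ℝ) /
    ((q.1.factorial : ℝ) * (q.2.1.factorial : ℝ) * (q.2.2.1.factorial : ℝ) *
      (q.2.2.2.factorial : ℝ)) * x q.1 * y q.2.1

lemma d5_heq_aux {m n : ℕ} (h : m = n) (p : Fin (m + 1) × Fin (m + 1))
    (q : Fin (n + 1) × Fin (n + 1)) (h1 : (p.1 : ℕ) = q.1) (h2 : (p.2 : ℕ) = q.2) :
    HEq p q := by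
  subst h
  rw [show p = q from Prod.ext (Fin.ext h1) (Fin.ext h2)]

/-- Reindexing of the constrained quadruples by `(N, m, m̃)` with `m, m̃ ≤ N`. -/
def d5Equiv : (Σ N : ℕ, Fin (N + 1) × Fin (N + 1)) ≃
    {q : ℕ × ℕ × ℕ × ℕ // q.1 + q.2.1 = q.2.2.1 + q.2.2.2} where
  toFun p := ⟨((p.2.1 : ℕ), p.1 - (p.2.1 : ℕ), (p.2.2 : ℕ), p.1 - (p.2.2 : ℕ)), by
    have h1 := p.2.1.isLt; have h2 := p.2.2.isLt
    simp only
    omega⟩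
  invFun q := ⟨q.1.1 + q.1.2.1, ⟨q.1.1, by omega⟩, ⟨q.1.2.2.1, by
    have := q.2; omega⟩⟩
  left_inv := by
    rintro ⟨N, i, j⟩
    have hi := i.isLt; have hj := j.isLt
    refine Sigma.ext (by simp only; omega)
      (d5_heq_aux (by simp only; omega) _ _ rfl rfl)
  right_inv := by
    rintro ⟨⟨m, n, mt, nt⟩, h⟩
    have h' : m + n = mt + nt := h
    refine Subtype.ext ?_
    show ((m : ℕ), m + n - m, (mt : ℕ), m + n - mt) = (m, n, mt, nt)
    clear h
    simp only [Prod.mk.injEq, true_and]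
    exact ⟨by omega, by omega⟩

/-- Lemma D.5 ('summation'): if `0 ≤ x m ≤ a^m` and `0 ≤ y n ≤ a^n`, then the family
`((m̃+ñ)!/(m! n! m̃! ñ!)) x_m y_n`, indexed by quadruples with `m + n = m̃ + ñ`, is
summable with sum at most `e^{4a}`. -/
theorem summation_lemma (a : ℝ) (ha : 0 ≤ a) (x y : ℕ → ℝ)
    (hx0 : ∀ m, 0 ≤ x m) (hxa : ∀ m, x m ≤ a ^ m)
    (hy0 : ∀ n, 0 ≤ y n) (hya : ∀ n, y n ≤ a ^ n) :
    Summable (fun q : {q : ℕ × ℕ × ℕ × ℕ // q.1 + q.2.1 = q.2.2.1 + q.2.2.2} =>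
      summandD5 x y q.1) ∧
    ∑' q : {q : ℕ × ℕ × ℕ × ℕ // q.1 + q.2.1 = q.2.2.1 + q.2.2.2},
      summandD5 x y q.1 ≤ Real.exp (4 * a) := by
  -- transfer everything through `d5Equiv`
  set g : (Σ N : ℕ, Fin (N + 1) × Fin (N + 1)) → ℝ :=
    fun p => summandD5 x y (d5Equiv p).1 with hgdef
  have hq0 : ∀ q : ℕ × ℕ × ℕ × ℕ, 0 ≤ summandD5 x y q := by
    intro q
    unfold summandD5
    have : (0:ℝ) ≤ ((q.2.2.1 + q.2.2.2).factorial : ℝ) /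
        ((q.1.factorial : ℝ) * (q.2.1.factorial : ℝ) * (q.2.2.1.factorial : ℝ) *
          (q.2.2.2.factorial : ℝ)) := by positivity
    exact mul_nonneg (mul_nonneg this (hx0 _)) (hy0 _)
  have hg0 : ∀ p, 0 ≤ g p := fun p => hq0 _
  -- the key per-slice bound
  have key : ∀ N : ℕ, ∑ p : Fin (N + 1) × Fin (N + 1), g ⟨N, p⟩
      ≤ (4 * a) ^ N / N.factorial := by
    intro N
    have hterm : ∀ p : Fin (N + 1) × Fin (N + 1), g ⟨N, p⟩ ≤
        (N.choose p.1 : ℝ) * (N.choose p.2) * (a ^ N / N.factorial) := by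
      rintro ⟨i, j⟩
      have hi : (i : ℕ) ≤ N := Nat.lt_succ_iff.mp i.isLt
      have hj : (j : ℕ) ≤ N := Nat.lt_succ_iff.mp j.isLt
      show summandD5 x y ((i : ℕ), N - (i : ℕ), (j : ℕ), N - (j : ℕ)) ≤ _
      unfold summandD5
      simp only
      have hN : (j : ℕ) + (N - (j : ℕ)) = N := by omega
      rw [hN]
      set C : ℝ := (N.factorial : ℝ) /
        (((i : ℕ).factorial : ℝ) * ((N - (i : ℕ)).factorial : ℝ) *
          ((j : ℕ).factorial : ℝ) * ((N - (j : ℕ)).factorial : ℝ)) with hC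
      have hC0 : 0 ≤ C := by rw [hC]; positivity
      have hCeq : C = (N.choose i : ℝ) * (N.choose j) / N.factorial := by
        rw [hC, Nat.cast_choose ℝ hi, Nat.cast_choose ℝ hj]
        have f1 : ((i : ℕ).factorial : ℝ) ≠ 0 := Nat.cast_ne_zero.mpr (Nat.factorial_ne_zero _)
        have f2 : (((N - (i : ℕ)).factorial : ℕ) : ℝ) ≠ 0 :=
          Nat.cast_ne_zero.mpr (Nat.factorial_ne_zero _)
        have f3 : ((j : ℕ).factorial : ℝ) ≠ 0 := Nat.cast_ne_zero.mpr (Nat.factorial_ne_zero _)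
        have f4 : (((N - (j : ℕ)).factorial : ℕ) : ℝ) ≠ 0 :=
          Nat.cast_ne_zero.mpr (Nat.factorial_ne_zero _)
        have f5 : ((N.factorial : ℕ) : ℝ) ≠ 0 := Nat.cast_ne_zero.mpr (Nat.factorial_ne_zero _)
        field_simp
      calc C * x (i : ℕ) * y (N - (i : ℕ))
          ≤ C * a ^ (i : ℕ) * a ^ (N - (i : ℕ)) := by
            apply mul_le_mul (mul_le_mul_of_nonneg_left (hxa _) hC0) (hya _) (hy0 _)
            positivity
        _ = C * a ^ N := by
            rw [mul_assoc, ← pow_add]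
            congr 2
            omega
        _ = (N.choose i : ℝ) * (N.choose j) * (a ^ N / N.factorial) := by
            rw [hCeq]; ring
    have h2 : ∑ i : Fin (N + 1), (N.choose i : ℝ) = 2 ^ N := by
      rw [Fin.sum_univ_eq_sum_range (fun i => (N.choose i : ℝ))]
      exact_mod_cast Nat.sum_range_choose N
    calc ∑ p : Fin (N + 1) × Fin (N + 1), g ⟨N, p⟩
        ≤ ∑ p : Fin (N + 1) × Fin (N + 1),
            (N.choose p.1 : ℝ) * (N.choose p.2) * (a ^ N / N.factorial) :=
          Finset.sum_le_sum fun p _ => hterm p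
      _ = (∑ i : Fin (N + 1), (N.choose i : ℝ)) * (∑ j : Fin (N + 1), (N.choose j : ℝ))
            * (a ^ N / N.factorial) := by
          rw [← Finset.sum_mul, Finset.sum_mul_sum, Fintype.sum_prod_type]
      _ = (4 * a) ^ N / N.factorial := by
          rw [h2, mul_pow, show (4 : ℝ) ^ N = 2 ^ N * 2 ^ N by rw [← mul_pow]; norm_num]
          ring
  have houter : Summable (fun N : ℕ => ∑' p : Fin (N + 1) × Fin (N + 1), g ⟨N, p⟩) := by
    apply Summable.of_nonneg_of_le (fun N => tsum_nonneg fun p => hg0 _)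
      (fun N => ?_) (Real.summable_pow_div_factorial (4 * a))
    rw [tsum_fintype]
    exact key N
  have hsum_g : Summable g :=
    (summable_sigma_of_nonneg hg0).mpr ⟨fun N => Summable.of_finite, houter⟩
  have hsum_S : Summable (fun q : {q : ℕ × ℕ × ℕ × ℕ // q.1 + q.2.1 = q.2.2.1 + q.2.2.2} =>
      summandD5 x y q.1) := d5Equiv.summable_iff.mp hsum_g
  refine ⟨hsum_S, ?_⟩
  rw [← Equiv.tsum_eq d5Equiv fun q => summandD5 x y q.1]
  have htsum : ∑' p, g p ≤ Real.exp (4 * a) := by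
    rw [Summable.tsum_sigma' (fun N => Summable.of_finite) hsum_g]
    calc ∑' (N : ℕ) (p : Fin (N + 1) × Fin (N + 1)), g ⟨N, p⟩
        ≤ ∑' N : ℕ, (4 * a) ^ N / N.factorial := by
          apply Summable.tsum_le_tsum (fun N => ?_) houter (Real.summable_pow_div_factorial (4 * a))
          rw [tsum_fintype]
          exact key N
      _ = Real.exp (4 * a) := by
          rw [Real.exp_eq_exp_ℝ, NormedSpace.exp_eq_tsum_div]
  exact htsum
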